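/- arXiv:2211.03194 — 4 statements merged into one kernel-verified Lean document; each statement's English description precedes it below -/
import Mathlib

section
/- Assume that for every h ∈ Λ(Q) and p ∈ 𝒫 the function Ψ_p(h,·) : [t₀,t_f] → ℝ is continuous. Take S := Λ(Q), and for each i ∈ I and p ∈ 𝒫_i let A_p(h) be the set of ALL triples (q,γ,Δ) with q ∈ 𝒫_i, γ ∈ L²₊([t₀,t_f]), Δ ∈ ℝ such that γ ≤ h_p a.e., the support of γ(·−Δ) is contained in [t₀,t_f] up to a null set, and h_q(t) + γ(t−Δ) ≤ B_q for a.e. t ∈ [t₀,t_f]. Then a flow h* ∈ S is a side-constrained dynamic equilibrium w.r.t. S and (A_p) if and only if h* is a dynamic equilibrium with fixed flow volumes and departure time choice. -/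
open MeasureTheory Filter Set

noncomputable section

/-- The restriction of the Lebesgue measure to the planning horizon `[t₀, t_f]`. -/
def horizonMeasure (t0 tf : ℝ) : Measure ℝ := volume.restrict (Icc t0 tf)

/-- `f` is (a representative of) a nonnegative square-integrable function on `[t₀, t_f]`,
i.e. an element of `L²₊([t₀,t_f])`. -/
def L2nonneg (t0 tf : ℝ) (f : ℝ → ℝ) : Prop :=
  MemLp f 2 (horizonMeasure t0 tf) ∧ 0 ≤ᵐ[horizonMeasure t0 tf] f

/-- A walk inflow: a vector of nonnegative L² functions on the horizon, one per walk. -/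
def WalkInflow {P : Type*} (t0 tf : ℝ) (h : P → ℝ → ℝ) : Prop := ∀ p, L2nonneg t0 tf (h p)

variable {I P E : Type*}

/-- The (finite) set of walks belonging to commodity `i`. -/
def commWalks [Fintype P] [DecidableEq I] (comm : P → I) (i : I) : Finset P :=
  Finset.univ.filter fun p => comm p = i

/-- The set `Λ(Q)` of feasible walk inflows for fixed flow volumes `Q` with
inflow bounds `B`. -/
def LambdaQ [Fintype P] [DecidableEq I] (t0 tf : ℝ) (comm : P → I) (B : P → ℝ)
    (Q : I → ℝ) : Set (P → ℝ → ℝ) :=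
  {h | WalkInflow t0 tf h ∧
    (∀ i, ∑ p ∈ commWalks comm i, ∫ t, h p t ∂(horizonMeasure t0 tf) = Q i) ∧
    ∀ p, ∀ᵐ t ∂(horizonMeasure t0 tf), h p t ≤ B p}

/-- The set `Λ(r)` of feasible walk inflows for fixed network inflow rates `r`. -/
def LambdaR [Fintype P] [DecidableEq I] (t0 tf : ℝ) (comm : P → I)
    (r : I → ℝ → ℝ) : Set (P → ℝ → ℝ) :=
  {h | WalkInflow t0 tf h ∧
    ∀ i, ∀ᵐ t ∂(horizonMeasure t0 tf), ∑ p ∈ commWalks comm i, h p t = r i t}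

/-- The canonical scalar product `⟨f,g⟩ = Σ_p ∫ f_p(t) g_p(t) dt` on `L²([t₀,t_f])^𝒫`. -/
def inner2 [Fintype P] (t0 tf : ℝ) (f g : P → ℝ → ℝ) : ℝ :=
  ∑ p : P, ∫ t, f p t * g p t ∂(horizonMeasure t0 tf)

/-- Weak convergence of a sequence of walk inflows. -/
def WeakConvTo [Fintype P] (t0 tf : ℝ) (hn : ℕ → P → ℝ → ℝ) (h : P → ℝ → ℝ) : Prop :=
  ∀ g : P → ℝ → ℝ, (∀ p, MemLp (g p) 2 (horizonMeasure t0 tf)) →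
    Tendsto (fun n => inner2 t0 tf (hn n) g) atTop (nhds (inner2 t0 tf h g))

/-- Convergence in `L²`-norm on the horizon. -/
def L2Tendsto (t0 tf : ℝ) (fn : ℕ → ℝ → ℝ) (f : ℝ → ℝ) : Prop :=
  Tendsto (fun n => eLpNorm (fun t => fn n t - f t) 2 (horizonMeasure t0 tf)) atTop (nhds 0)

/-- Dynamic equilibrium with fixed inflow rates. -/
def IsDEFixedRates [Fintype P] [DecidableEq I] (t0 tf : ℝ) (comm : P → I) (r : I → ℝ → ℝ)
    (Psi : (P → ℝ → ℝ) → P → ℝ → ℝ) (h : P → ℝ → ℝ) : Prop :=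
  h ∈ LambdaR t0 tf comm r ∧
    ∀ p q, comm p = comm q →
      ∀ᵐ t ∂(horizonMeasure t0 tf), 0 < h p t → Psi h p t ≤ Psi h q t

/-- Dynamic equilibrium with fixed flow volumes and departure time choice. -/
def IsDEFixedVolume [Fintype P] [DecidableEq I] (t0 tf : ℝ) (comm : P → I) (B : P → ℝ)
    (Q : I → ℝ) (Psi : (P → ℝ → ℝ) → P → ℝ → ℝ) (h : P → ℝ → ℝ) : Prop :=
  h ∈ LambdaQ t0 tf comm B Q ∧
    ∀ i, ∃ ν : ℝ, ∀ p, comm p = i →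
      ∀ᵐ t ∂(horizonMeasure t0 tf),
        (0 < h p t → Psi h p t ≤ ν) ∧ (h p t < B p → ν ≤ Psi h p t)

/-- Dynamic equilibrium with elastic demands and departure time choice. -/
def IsDEElastic [Fintype P] [DecidableEq I] (t0 tf : ℝ) (comm : P → I) (B : P → ℝ)
    (Q : I → ℝ) (Psi : (P → ℝ → ℝ) → P → ℝ → ℝ) (Θ : I → ℝ → ℝ)
    (h : P → ℝ → ℝ) (Qstar : I → ℝ) : Prop :=
  (∀ i, 0 ≤ Qstar i ∧ Qstar i ≤ Q i) ∧
  h ∈ LambdaQ t0 tf comm B Qstar ∧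
  ∀ i, ∃ ν : ℝ,
    (∀ p, comm p = i → ∀ᵐ t ∂(horizonMeasure t0 tf),
      (0 < h p t → Psi h p t ≤ ν) ∧ (h p t < B p → ν ≤ Psi h p t)) ∧
    (Qstar i < Q i → ν = Θ i (Qstar i)) ∧
    (Qstar i = Q i → ν ≤ Θ i (Q i))

/-- The effective walk-delay operator of the extended (fixed-volume) instance obtained from an
elastic-demand instance: on original walks it is `Ψ`, on the new walk `p̃ᵢ` it is
`Θᵢ` of the total volume of commodity `i` on its original walks. -/
def PsiExt [Fintype P] [DecidableEq I] (t0 tf : ℝ) (comm : P → I)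
    (Psi : (P → ℝ → ℝ) → P → ℝ → ℝ) (Θ : I → ℝ → ℝ) :
    (P ⊕ I → ℝ → ℝ) → P ⊕ I → ℝ → ℝ := fun h' w t =>
  match w with
  | Sum.inl p => Psi (fun q => h' (Sum.inl q)) p t
  | Sum.inr i =>
      Θ i (∑ p ∈ commWalks comm i, ∫ s, h' (Sum.inl p) s ∂(horizonMeasure t0 tf))

/-! ## Side-constrained equilibria -/

/-- The basic requirements on an admissible γ-deviation `(q,γ,Δ)` from walk `p` at inflow `h`:
`q` belongs to the same commodity as `p`, `γ ∈ L²₊([t₀,t_f])`, `γ ≤ h_p` a.e.,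
`h_q(t) + γ(t−Δ) ≤ B_q` a.e., and the support of `γ(·−Δ)` is contained in `[t₀,t_f]`
up to a null set. -/
def ValidTriple (t0 tf : ℝ) (comm : P → I) (B : P → ℝ) (h : P → ℝ → ℝ)
    (p q : P) (γ : ℝ → ℝ) (Δ : ℝ) : Prop :=
  comm q = comm p ∧ L2nonneg t0 tf γ ∧
  (∀ᵐ t ∂(horizonMeasure t0 tf), γ t ≤ h p t) ∧
  (∀ᵐ t ∂(horizonMeasure t0 tf), h q t + γ (t - Δ) ≤ B q) ∧
  (∀ᵐ t ∂(volume : Measure ℝ), γ (t - Δ) ≠ 0 → t ∈ Icc t0 tf)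

/-- The set `U_p(h,t)` of admissible deviations `(q,Δ)` for walk `p` at time `t` under the
inflow `h`, given the correspondence `A` of admissible γ-deviations. -/
def UDev (t0 tf : ℝ) (A : (P → ℝ → ℝ) → P → Set (P × (ℝ → ℝ) × ℝ))
    (h : P → ℝ → ℝ) (p : P) (t : ℝ) : Set (P × ℝ) :=
  {qd | ∀ δ > (0:ℝ), ∀ ε > (0:ℝ), ∃ γ : ℝ → ℝ,
    L2nonneg t0 tf γ ∧
    0 < ∫ s, γ s ∂(horizonMeasure t0 tf) ∧
    (∀ᵐ s ∂(horizonMeasure t0 tf), γ s ≤ ε) ∧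
    (∀ᵐ s ∂(horizonMeasure t0 tf), γ s ≠ 0 → s ∈ Icc (t - δ) (t + δ)) ∧
    (qd.1, γ, qd.2) ∈ A h p}

/-- Side-constrained dynamic equilibrium (SCDE) w.r.t. the effective walk-delay operator
`Psi` (valued in a preorder, e.g. `ℝ` or `ℝ ∪ {∞}`), the constraint set `S` and the
correspondences `A` of admissible γ-deviations. -/
def IsSCDE {α : Type*} [Preorder α] (t0 tf : ℝ)
    (Psi : (P → ℝ → ℝ) → P → ℝ → α) (S : Set (P → ℝ → ℝ))
    (A : (P → ℝ → ℝ) → P → Set (P × (ℝ → ℝ) × ℝ)) (h : P → ℝ → ℝ) : Prop :=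
  h ∈ S ∧ ∀ p, ∀ t ∈ Icc t0 tf, ∀ q Δ, (q, Δ) ∈ UDev t0 tf A h p t →
    Psi h p t ≤ Psi h q (t + Δ)

/-- The walk inflow `H_{p→q}(h,γ,Δ)` obtained from `h` by the γ-deviation `(q,γ,Δ)`
from walk `p`. -/
def Hshift [DecidableEq P] (h : P → ℝ → ℝ) (p q : P) (γ : ℝ → ℝ) (Δ : ℝ) :
    P → ℝ → ℝ := fun w t =>
  h w t + (if w = q then γ (t - Δ) else 0) - (if w = p then γ t else 0)

/-- The set `M(h)` of all walk inflows reachable from `h` by a single admissible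
γ-deviation. -/
def MSet [DecidableEq P] (A : (P → ℝ → ℝ) → P → Set (P × (ℝ → ℝ) × ℝ))
    (h : P → ℝ → ℝ) : Set (P → ℝ → ℝ) :=
  {h' | ∃ p q γ Δ, (q, γ, Δ) ∈ A h p ∧ h' = Hshift h p q γ Δ}

/-- The tangent cone `T(A_p,h)` at `h` w.r.t. the correspondences `A`. -/
def TangentCone [Fintype P] [DecidableEq P] (t0 tf : ℝ)
    (A : (P → ℝ → ℝ) → P → Set (P × (ℝ → ℝ) × ℝ)) (h : P → ℝ → ℝ) :
    Set (P → ℝ → ℝ) :=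
  {v | (∀ p, MemLp (v p) 2 (horizonMeasure t0 tf)) ∧
    ∃ (hn : ℕ → P → ℝ → ℝ) (tn : ℕ → ℝ),
      (∀ n, hn n ∈ MSet A h) ∧ (∀ n, 0 < tn n) ∧
      Tendsto tn atTop (nhds 0) ∧
      ∀ p, Tendsto
        (fun n => eLpNorm (fun t => (hn n p t - h p t) / tn n - v p t) 2
          (horizonMeasure t0 tf)) atTop (nhds 0)}

/-- The correspondences `A` are closed under rate-reduction at `h`. -/
def ClosedRateReduction (A : (P → ℝ → ℝ) → P → Set (P × (ℝ → ℝ) × ℝ))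
    (h : P → ℝ → ℝ) : Prop :=
  ∀ p q γ Δ, (q, γ, Δ) ∈ A h p → ∀ lam ∈ Icc (0:ℝ) 1,
    (q, fun t => lam * γ t, Δ) ∈ A h p

/-- The correspondences `A` are closed under time-restriction at `h`. -/
def ClosedTimeRestriction (A : (P → ℝ → ℝ) → P → Set (P × (ℝ → ℝ) × ℝ))
    (h : P → ℝ → ℝ) : Prop :=
  ∀ p q γ Δ, (q, γ, Δ) ∈ A h p → ∀ J : Set ℝ, MeasurableSet J →
    (q, J.indicator γ, Δ) ∈ A h p

/-- `S` is closed with respect to elementary directions (w.r.t. the correspondences `A`). -/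
def ClosedElemDir (t0 tf : ℝ) (comm : P → I) (S : Set (P → ℝ → ℝ))
    (A : (P → ℝ → ℝ) → P → Set (P × (ℝ → ℝ) × ℝ)) : Prop :=
  ∀ h ∈ S, ∀ h' ∈ S, ∀ p q, comm p = comm q →
    ∀ J : Set ℝ, J ⊆ Icc t0 tf → MeasurableSet J → 0 < volume J →
      (∀ t ∈ J, h' p t < h p t ∧ h q t < h' q t) →
      ∃ t ∈ J, (q, (0:ℝ)) ∈ UDev t0 tf A h p t

/-! ## Edge-load constraints and network loading -/

/-- The edge-load feasibility set `S = {h ∈ Λ(Q) : f_e(h,θ) ≤ c_e(θ) for all e and θ ≥ 0}`. -/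
def SEdge [Fintype P] [DecidableEq I] (t0 tf : ℝ) (comm : P → I) (B : P → ℝ) (Q : I → ℝ)
    (f : (P → ℝ → ℝ) → E → ℝ → ℝ) (c : E → ℝ → ℝ) : Set (P → ℝ → ℝ) :=
  {h | h ∈ LambdaQ t0 tf comm B Q ∧ ∀ e θ, 0 ≤ θ → f h e θ ≤ c e θ}

/-- Strong LP-deviations: admissible γ-deviations whose alternative walk is strictly
unsaturated at every entrance time. -/
def AsLP (t0 tf : ℝ) (comm : P → I) (B : P → ℝ)
    (len : P → ℕ) (edgeOf : P → ℕ → E)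
    (τ : (P → ℝ → ℝ) → P → ℕ → ℝ → ℝ)
    (f : (P → ℝ → ℝ) → E → ℝ → ℝ) (c : E → ℝ → ℝ)
    (h : P → ℝ → ℝ) (p : P) : Set (P × (ℝ → ℝ) × ℝ) :=
  {d | ValidTriple t0 tf comm B h p d.1 d.2.1 d.2.2 ∧
    ∃ γ₀ : ℝ → ℝ, γ₀ =ᵐ[horizonMeasure t0 tf] d.2.1 ∧ (∀ s, s ∉ Icc t0 tf → γ₀ s = 0) ∧
      ∀ t, γ₀ (t - d.2.2) ≠ 0 → ∀ j, 1 ≤ j → j ≤ len d.1 →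
        f h (edgeOf d.1 j) (τ h d.1 j t) < c (edgeOf d.1 j) (τ h d.1 j t)}

/-- Weak LP-deviations: admissible γ-deviations whose alternative walk is strictly
unsaturated during the whole traversal of each of its edges. -/
def AwLP (t0 tf : ℝ) (comm : P → I) (B : P → ℝ)
    (len : P → ℕ) (edgeOf : P → ℕ → E)
    (τ : (P → ℝ → ℝ) → P → ℕ → ℝ → ℝ)
    (f : (P → ℝ → ℝ) → E → ℝ → ℝ) (c : E → ℝ → ℝ)
    (h : P → ℝ → ℝ) (p : P) : Set (P × (ℝ → ℝ) × ℝ) :=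
  {d | ValidTriple t0 tf comm B h p d.1 d.2.1 d.2.2 ∧
    ∃ γ₀ : ℝ → ℝ, γ₀ =ᵐ[horizonMeasure t0 tf] d.2.1 ∧ (∀ s, s ∉ Icc t0 tf → γ₀ s = 0) ∧
      ∀ t, γ₀ (t - d.2.2) ≠ 0 → ∀ j, 1 ≤ j → j ≤ len d.1 →
        ∀ θ ∈ Icc (τ h d.1 j t) (τ h d.1 (j+1) t),
          f h (edgeOf d.1 j) θ < c (edgeOf d.1 j) θ}

/-- Strong MNS-deviations: strong LP-deviations together with deviations without time
shift whose alternative walk is strictly unsaturated (at entrance times) outside a common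
prefix with the original walk. -/
def AsMNS (t0 tf : ℝ) (comm : P → I) (B : P → ℝ)
    (len : P → ℕ) (edgeOf : P → ℕ → E)
    (τ : (P → ℝ → ℝ) → P → ℕ → ℝ → ℝ)
    (f : (P → ℝ → ℝ) → E → ℝ → ℝ) (c : E → ℝ → ℝ)
    (h : P → ℝ → ℝ) (p : P) : Set (P × (ℝ → ℝ) × ℝ) :=
  AsLP t0 tf comm B len edgeOf τ f c h p ∪
  {d | d.2.2 = 0 ∧ ValidTriple t0 tf comm B h p d.1 d.2.1 d.2.2 ∧
    ∃ k, k ≤ len p ∧ k ≤ len d.1 ∧ (∀ j, 1 ≤ j → j ≤ k → edgeOf p j = edgeOf d.1 j) ∧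
      ∃ γ₀ : ℝ → ℝ, γ₀ =ᵐ[horizonMeasure t0 tf] d.2.1 ∧ (∀ s, s ∉ Icc t0 tf → γ₀ s = 0) ∧
        ∀ t, γ₀ t ≠ 0 → ∀ j, k < j → j ≤ len d.1 →
          f h (edgeOf d.1 j) (τ h d.1 j t) < c (edgeOf d.1 j) (τ h d.1 j t)}

/-- Weak MNS-deviations: weak LP-deviations together with deviations without time shift
whose alternative walk is strictly unsaturated (during edge traversal) outside a common
prefix with the original walk. -/
def AwMNS (t0 tf : ℝ) (comm : P → I) (B : P → ℝ)
    (len : P → ℕ) (edgeOf : P → ℕ → E)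
    (τ : (P → ℝ → ℝ) → P → ℕ → ℝ → ℝ)
    (f : (P → ℝ → ℝ) → E → ℝ → ℝ) (c : E → ℝ → ℝ)
    (h : P → ℝ → ℝ) (p : P) : Set (P × (ℝ → ℝ) × ℝ) :=
  AwLP t0 tf comm B len edgeOf τ f c h p ∪
  {d | d.2.2 = 0 ∧ ValidTriple t0 tf comm B h p d.1 d.2.1 d.2.2 ∧
    ∃ k, k ≤ len p ∧ k ≤ len d.1 ∧ (∀ j, 1 ≤ j → j ≤ k → edgeOf p j = edgeOf d.1 j) ∧
      ∃ γ₀ : ℝ → ℝ, γ₀ =ᵐ[horizonMeasure t0 tf] d.2.1 ∧ (∀ s, s ∉ Icc t0 tf → γ₀ s = 0) ∧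
        ∀ t, γ₀ t ≠ 0 → ∀ j, k < j → j ≤ len d.1 →
          ∀ θ ∈ Icc (τ h d.1 j t) (τ h d.1 (j+1) t),
            f h (edgeOf d.1 j) θ < c (edgeOf d.1 j) θ}
/-
SCDE ⇒ DE. Let p, q be walks of one commodity and c a level. If both
{h_p > 0, Ψ_p > c} and {h_q < B_q, Ψ_q < c} had positive measure, then (after shrinking them to
measurable sets with uniform margins a) some translate by Δ of the first would meet the second in
positive measure, by Fubini. Pick a point t of that intersection G every neighbourhood of which
meets G in positive measure; the functions min(ε, a) · 1_{G ∩ [t-δ, t+δ]} witness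
(q, Δ) ∈ U_p(h, t), while Ψ_p(t) > c > Ψ_q(t + Δ), contradicting SCDE. Hence the infimum ν of
the levels above which no walk of the commodity carries flow separates used from unsaturated
walk-times.

DE ⇒ SCDE. A deviation (q, Δ) ∈ U_p(h, t) yields points arbitrarily close to t with h_p > 0,
where Ψ_p ≤ ν, and points of the horizon arbitrarily close to t + Δ with h_q < B_q, where
Ψ_q ≥ ν; continuity of Ψ gives Ψ_p(t) ≤ ν ≤ Ψ_q(t + Δ).
-/

open scoped Topology

theorem lintegral_volume_inter_preimage_add {E F : Set ℝ} (hE : MeasurableSet E)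
    (hF : MeasurableSet F) :
    ∫⁻ Δ, volume (E ∩ (· + Δ) ⁻¹' F) = volume E * volume F := by
  have hind : ∀ Δ, volume (E ∩ (· + Δ) ⁻¹' F)
      = ∫⁻ u, E.indicator 1 u * F.indicator 1 (u + Δ) := fun Δ => by
    rw [← lintegral_indicator_one (hE.inter (measurable_add_const Δ hF)), inter_indicator_one]
    rfl
  calc ∫⁻ Δ, volume (E ∩ (· + Δ) ⁻¹' F)
      = ∫⁻ u, ∫⁻ Δ, E.indicator 1 u * F.indicator 1 (u + Δ) := by
        simp_rw [hind]
        exact lintegral_lintegral_swap ((((measurable_one.indicator hE).comp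
          measurable_snd).mul ((measurable_one.indicator hF).comp
          (measurable_snd.add measurable_fst))).aemeasurable)
    _ = ∫⁻ u, E.indicator 1 u * volume F := by
        congr 1; funext u
        have hFu : Measurable fun Δ => F.indicator (1 : ℝ → ENNReal) (u + Δ) :=
          (measurable_one.indicator hF).comp (measurable_const_add u)
        rw [lintegral_const_mul _ hFu, lintegral_add_left_eq_self (F.indicator 1) u,
          lintegral_indicator_one hF]
    _ = volume E * volume F := by
        rw [lintegral_mul_const _ (measurable_one.indicator hE), lintegral_indicator_one hE]

theorem exists_volume_inter_preimage_add_ne_zero {E F : Set ℝ} (hE : MeasurableSet E)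
    (hF : MeasurableSet F) (hE0 : volume E ≠ 0) (hF0 : volume F ≠ 0) :
    ∃ Δ : ℝ, volume (E ∩ (· + Δ) ⁻¹' F) ≠ 0 := by
  by_contra! h
  have := lintegral_volume_inter_preimage_add hE hF
  simp only [h, lintegral_zero] at this
  exact mul_ne_zero hE0 hF0 this.symm

theorem Filter.Frequently.comp_sub_right {P : ℝ → Prop} (h : ∃ᵐ u ∂volume, P u) (Δ : ℝ) :
    ∃ᵐ v ∂volume, P (v - Δ) := by
  have hpre := measure_preimage_add_right (volume : Measure ℝ) (-Δ) {u | P u}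
  simp only [preimage_ofPred_eq, ← sub_eq_add_neg] at hpre
  rw [frequently_ae_iff] at h ⊢
  rwa [hpre]

theorem exists_mem_forall_nhds_measure_inter_ne_zero {X : Type*} [TopologicalSpace X]
    [MeasurableSpace X] [HereditarilyLindelofSpace X] {μ : Measure X} {G : Set X}
    (hG : MeasurableSet G) (hG0 : μ G ≠ 0) :
    ∃ t ∈ G, ∀ U ∈ 𝓝 t, μ (U ∩ G) ≠ 0 := by
  have : (ae (μ.restrict G)).NeBot := ae_neBot.2 (by rwa [Ne, Measure.restrict_eq_zero])
  obtain ⟨t, htG, ht⟩ :=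
    ((ae_restrict_mem hG).and (Measure.support_mem_ae (μ := μ.restrict G))).exists
  refine ⟨t, htG, fun U hU => ?_⟩
  rw [← Measure.restrict_apply' hG]
  exact ((Measure.mem_support_iff_forall t).1 ht U hU).ne'

section AlmostEverywhere

variable {α : Type*} [MeasurableSpace α] {μ : Measure α}

theorem exists_pos_frequently_le_and {g : α → ℝ} {P : α → Prop} (h : ∃ᵐ x ∂μ, 0 < g x ∧ P x) :
    ∃ a > 0, ∃ᵐ x ∂μ, a ≤ g x ∧ P x := by
  by_contra! hnot
  have hall : ∀ᵐ x ∂μ, ∀ n : ℕ, 1 / ((n : ℝ) + 1) ≤ g x → ¬P x :=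
    ae_all_iff.2 fun _ => hnot _ Nat.one_div_pos_of_nat
  refine h.and_eventually hall |>.exists.elim fun x ⟨⟨hg, hP⟩, hx⟩ => ?_
  obtain ⟨n, hn⟩ := exists_nat_one_div_lt hg
  exact hx n hn.le hP

theorem ae_imp_le_of_forall_gt {g : α → ℝ} {P : α → Prop} {ν : ℝ}
    (h : ∀ c > ν, ∀ᵐ x ∂μ, P x → g x ≤ c) : ∀ᵐ x ∂μ, P x → g x ≤ ν := by
  have hall : ∀ᵐ x ∂μ, ∀ c : ℚ, ν < c → P x → g x ≤ c := ae_all_iff.2 fun c => by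
    by_cases hc : ν < c
    · exact (h c hc).mono fun x hx _ => hx
    · exact ae_of_all _ fun _ hc' => absurd hc' hc
  filter_upwards [hall] with x hx hP
  exact le_of_forall_lt_rat_imp_le fun c hc => hx c hc hP

theorem ae_imp_ge_of_forall_lt {g : α → ℝ} {P : α → Prop} {ν : ℝ}
    (h : ∀ c < ν, ∀ᵐ x ∂μ, P x → c ≤ g x) : ∀ᵐ x ∂μ, P x → ν ≤ g x := by
  have hneg : ∀ᵐ x ∂μ, P x → -g x ≤ -ν := ae_imp_le_of_forall_gt fun c hc =>
    (h (-c) (neg_lt.1 hc)).mono fun x hx hP => neg_le.1 (hx hP)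
  exact hneg.mono fun x hx hP => neg_le_neg_iff.1 (hx hP)

theorem exists_level_separating {ι : Type*} (f : ι → α → ℝ) (A U : ι → α → Prop) {M : ℝ}
    (hM : ∀ i, ∀ᵐ x ∂μ, |f i x| ≤ M)
    (hsep : ∀ i j c, (∃ᵐ x ∂μ, A i x ∧ c < f i x) → ∀ᵐ x ∂μ, U j x → c ≤ f j x) :
    ∃ ν, ∀ i, ∀ᵐ x ∂μ, (A i x → f i x ≤ ν) ∧ (U i x → ν ≤ f i x) := by
  set C := {c | -|M| ≤ c ∧ ∀ i, ∀ᵐ x ∂μ, A i x → f i x ≤ c}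
  have hMC : |M| ∈ C := ⟨neg_le_self (abs_nonneg M),
    fun i => (hM i).mono fun x hx _ => (le_abs_self _).trans (hx.trans (le_abs_self M))⟩
  have hC : BddBelow C := ⟨-|M|, fun _ hc => hc.1⟩
  refine ⟨sInf C, fun i => (ae_imp_le_of_forall_gt fun c hc => ?_).and
    (ae_imp_ge_of_forall_lt fun c hc => ?_)⟩
  · obtain ⟨c', hc'C, hc'⟩ := exists_lt_of_csInf_lt ⟨_, hMC⟩ hc
    exact (hc'C.2 i).mono fun x hx hA => (hx hA).trans hc'.le
  · by_cases hcM : c < -|M|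
    · exact (hM i).mono fun x hx _ => by
        linarith [le_abs_self M, (abs_le.1 hx).1]
    · obtain ⟨j, hj⟩ : ∃ j, ¬∀ᵐ x ∂μ, A j x → f j x ≤ c := by
        by_contra! hall
        exact notMem_of_lt_csInf hc hC ⟨not_lt.1 hcM, hall⟩
      exact hsep j i c ((Filter.not_eventually.1 hj).mono fun x hx => by push Not at hx; exact hx)

end AlmostEverywhere

theorem exists_forall_abs_le_of_continuousOn {ι X : Type*} [Finite ι] [TopologicalSpace X]
    {K : Set X} (hK : IsCompact K) {f : ι → X → ℝ} (hf : ∀ i, ContinuousOn (f i) K) :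
    ∃ M, ∀ i, ∀ x ∈ K, |f i x| ≤ M := by
  choose C hC using fun i => hK.exists_bound_of_continuousOn (hf i)
  obtain ⟨M, hM⟩ := Finite.exists_le C
  exact ⟨M, fun i x hx => (hC i x hx).trans (hM i)⟩

instance isFiniteMeasure_horizonMeasure (t0 tf : ℝ) : IsFiniteMeasure (horizonMeasure t0 tf) := by
  unfold horizonMeasure; infer_instance

theorem horizonMeasure_apply_of_subset {t0 tf : ℝ} {S : Set ℝ} (hS : MeasurableSet S)
    (hSsub : S ⊆ Icc t0 tf) : horizonMeasure t0 tf S = volume S := by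
  rw [horizonMeasure, Measure.restrict_apply hS, inter_eq_left.2 hSsub]

theorem ae_mem_Icc_horizonMeasure (t0 tf : ℝ) : ∀ᵐ u ∂horizonMeasure t0 tf, u ∈ Icc t0 tf :=
  ae_restrict_mem measurableSet_Icc

theorem exists_measurableSet_subset_Icc_of_frequently {t0 tf : ℝ} {P : ℝ → Prop}
    (hP : NullMeasurableSet {u | P u} (horizonMeasure t0 tf))
    (h : ∃ᵐ u ∂(horizonMeasure t0 tf), P u) :
    ∃ E ⊆ Icc t0 tf, MeasurableSet E ∧ (∀ u ∈ E, P u) ∧ volume E ≠ 0 := by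
  obtain ⟨E, hEP, hE, hEae⟩ := hP.exists_measurable_subset_ae_eq
  refine ⟨E ∩ Icc t0 tf, inter_subset_right, hE.inter measurableSet_Icc,
    fun u hu => hEP hu.1, ?_⟩
  rw [← Measure.restrict_apply hE, ← horizonMeasure, measure_congr hEae]
  exact frequently_ae_iff.1 h

def validDeviations (t0 tf : ℝ) (comm : P → I) (B : P → ℝ) :
    (P → ℝ → ℝ) → P → Set (P × (ℝ → ℝ) × ℝ) :=
  fun h p => {d | ValidTriple t0 tf comm B h p d.1 d.2.1 d.2.2}

theorem mem_UDev_validDeviations {t0 tf : ℝ} {comm : P → I} {B : P → ℝ} {h : P → ℝ → ℝ}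
    {p q : P} (hpq : comm q = comm p) (hp0 : 0 ≤ᵐ[horizonMeasure t0 tf] h p)
    (hqB : ∀ᵐ v ∂horizonMeasure t0 tf, h q v ≤ B q) {G : Set ℝ} (hG : MeasurableSet G)
    (hGsub : G ⊆ Icc t0 tf) {a Δ t : ℝ} (ha : 0 < a) (hGp : ∀ u ∈ G, a ≤ h p u)
    (hGq : ∀ u ∈ G, u + Δ ∈ Icc t0 tf ∧ h q (u + Δ) + a ≤ B q)
    (hloc : ∀ δ > 0, volume (Icc (t - δ) (t + δ) ∩ G) ≠ 0) :
    (q, Δ) ∈ UDev t0 tf (validDeviations t0 tf comm B) h p t := by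
  intro δ hδ ε hε
  set S := Icc (t - δ) (t + δ) ∩ G
  have hS : MeasurableSet S := measurableSet_Icc.inter hG
  have hb : 0 < min ε a := lt_min hε ha
  have hγ : L2nonneg t0 tf (S.indicator fun _ => min ε a) :=
    ⟨memLp_indicator_const 2 hS _ (Or.inr (measure_ne_top _ _)),
      ae_of_all _ (indicator_nonneg fun _ _ => hb.le)⟩
  refine ⟨_, hγ, ?_, ae_of_all _ fun u => ?_, ae_of_all _ fun u hu => ?_, hpq, hγ, ?_, ?_,
    ae_of_all _ fun v hv => ?_⟩
  · rw [integral_indicator_const _ hS, smul_eq_mul, measureReal_def]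
    refine mul_pos (ENNReal.toReal_pos ?_ (measure_ne_top _ _)) hb
    rw [horizonMeasure_apply_of_subset hS (inter_subset_right.trans hGsub)]
    exact hloc δ hδ
  · exact indicator_apply_le' (fun _ => min_le_left _ _) fun _ => hε.le
  · exact (mem_of_indicator_ne_zero hu).1
  · filter_upwards [hp0] with u hu
    exact indicator_apply_le' (fun huS => (min_le_right _ _).trans (hGp u huS.2)) fun _ => hu
  · filter_upwards [hqB] with v hv
    by_cases hvS : v - Δ ∈ S
    · have := (hGq _ hvS.2).2
      rw [sub_add_cancel] at this
      rw [indicator_of_mem hvS]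
      linarith [min_le_right ε a]
    · rwa [indicator_of_notMem hvS, add_zero]
  · have hvS : v - Δ ∈ S := mem_of_indicator_ne_zero (f := fun _ => min ε a) hv
    simpa using (hGq _ hvS.2).1

theorem IsSCDE.ae_le_delay_of_frequently {t0 tf : ℝ} {comm : P → I} {B : P → ℝ}
    {Psi : (P → ℝ → ℝ) → P → ℝ → ℝ} {S : Set (P → ℝ → ℝ)} {h : P → ℝ → ℝ}
    (hS : IsSCDE t0 tf Psi S (validDeviations t0 tf comm B) h) {p q : P}
    (hpq : comm q = comm p) (hp : L2nonneg t0 tf (h p))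
    (hq : AEMeasurable (h q) (horizonMeasure t0 tf))
    (hqB : ∀ᵐ v ∂horizonMeasure t0 tf, h q v ≤ B q)
    (hΨp : ContinuousOn (Psi h p) (Icc t0 tf)) (hΨq : ContinuousOn (Psi h q) (Icc t0 tf))
    {c : ℝ} (hc : ∃ᵐ u ∂horizonMeasure t0 tf, 0 < h p u ∧ c < Psi h p u) :
    ∀ᵐ v ∂horizonMeasure t0 tf, h q v < B q → c ≤ Psi h q v := by
  by_contra hne
  have hc' : ∃ᵐ v ∂horizonMeasure t0 tf, 0 < B q - h q v ∧ Psi h q v < c :=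
    (Filter.not_eventually.1 hne).mono fun v hv => by
      push Not at hv
      exact ⟨sub_pos.2 hv.1, hv.2⟩
  obtain ⟨a₁, ha₁, hE⟩ := exists_pos_frequently_le_and hc
  obtain ⟨a₂, ha₂, hF⟩ := exists_pos_frequently_le_and hc'
  obtain ⟨E, hEsub, hEm, hEP, hE0⟩ :=
    exists_measurableSet_subset_Icc_of_frequently
      (P := fun u => min a₁ a₂ ≤ h p u ∧ c < Psi h p u)
      ((nullMeasurableSet_le aemeasurable_const hp.1.aemeasurable).inter
        (nullMeasurableSet_lt aemeasurable_const (hΨp.aemeasurable measurableSet_Icc)))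
      (hE.mono fun u hu => ⟨(min_le_left _ _).trans hu.1, hu.2⟩)
  obtain ⟨F, hFsub, hFm, hFP, hF0⟩ :=
    exists_measurableSet_subset_Icc_of_frequently
      (P := fun v => min a₁ a₂ ≤ B q - h q v ∧ Psi h q v < c)
      ((nullMeasurableSet_le aemeasurable_const (aemeasurable_const.sub hq)).inter
        (nullMeasurableSet_lt (hΨq.aemeasurable measurableSet_Icc) aemeasurable_const))
      (hF.mono fun v hv => ⟨(min_le_right _ _).trans hv.1, hv.2⟩)
  obtain ⟨Δ, hΔ⟩ := exists_volume_inter_preimage_add_ne_zero hEm hFm hE0 hF0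
  have hGm : MeasurableSet (E ∩ (· + Δ) ⁻¹' F) := hEm.inter (measurable_add_const Δ hFm)
  obtain ⟨t, ⟨htE, htF⟩, hloc⟩ := exists_mem_forall_nhds_measure_inter_ne_zero hGm hΔ
  have hU := mem_UDev_validDeviations hpq hp.2 hqB hGm (inter_subset_left.trans hEsub)
    (lt_min ha₁ ha₂) (fun u hu => (hEP u hu.1).1)
    (fun u hu => ⟨hFsub hu.2, by linarith [(hFP _ hu.2).1]⟩)
    (fun δ hδ => hloc _ (Icc_mem_nhds (by linarith) (by linarith)))
  have := hS.2 p t (hEsub htE) q Δ hU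
  linarith [(hEP t htE).2, (hFP _ htF).2]

section Deviations

variable {t0 tf : ℝ} {comm : P → I} {B : P → ℝ} {h : P → ℝ → ℝ} {p q : P} {t Δ : ℝ}

theorem comm_eq_of_mem_UDev
    (hU : (q, Δ) ∈ UDev t0 tf (validDeviations t0 tf comm B) h p t) : comm q = comm p :=
  (hU 1 one_pos 1 one_pos).choose_spec.2.2.2.2.1

theorem exists_validTriple_frequently_pos_of_mem_UDev
    (hU : (q, Δ) ∈ UDev t0 tf (validDeviations t0 tf comm B) h p t) {δ : ℝ} (hδ : 0 < δ) :
    ∃ γ, ValidTriple t0 tf comm B h p q γ Δ ∧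
      ∃ᵐ u ∂horizonMeasure t0 tf, 0 < γ u ∧ u ∈ Icc (t - δ) (t + δ) := by
  obtain ⟨γ, -, hint, -, hsupp, hV⟩ := hU δ hδ 1 one_pos
  have hpos : ∃ᵐ u ∂horizonMeasure t0 tf, 0 < γ u := fun hle =>
    hint.not_ge (integral_nonpos_of_ae (hle.mono fun _ hu => not_lt.1 hu))
  exact ⟨γ, hV, (hpos.and_eventually hsupp).mono fun _ hu => ⟨hu.1, hu.2 hu.1.ne'⟩⟩

theorem frequently_le_of_mem_UDev {Ψ : ℝ → ℝ} {ν : ℝ}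
    (hΨ : ∀ᵐ u ∂horizonMeasure t0 tf, 0 < h p u → Ψ u ≤ ν)
    (hU : (q, Δ) ∈ UDev t0 tf (validDeviations t0 tf comm B) h p t) :
    ∃ᶠ u in 𝓝 t, u ∈ Icc t0 tf ∧ Ψ u ≤ ν := by
  refine Metric.nhds_basis_closedBall.frequently_iff.2 fun δ hδ => ?_
  obtain ⟨γ, hV, hγ⟩ := exists_validTriple_frequently_pos_of_mem_UDev hU hδ
  obtain ⟨u, ⟨hγu, hut⟩, hγle, hΨu, huI⟩ := (hγ.and_eventually
    (hV.2.2.1.and (hΨ.and (ae_mem_Icc_horizonMeasure t0 tf)))).exists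
  exact ⟨u, Real.closedBall_eq_Icc ▸ hut, huI, hΨu (hγu.trans_le hγle)⟩

theorem frequently_ge_of_mem_UDev {Ψ : ℝ → ℝ} {ν : ℝ}
    (hΨ : ∀ᵐ v ∂horizonMeasure t0 tf, h q v < B q → ν ≤ Ψ v)
    (hU : (q, Δ) ∈ UDev t0 tf (validDeviations t0 tf comm B) h p t) :
    ∃ᶠ v in 𝓝 (t + Δ), v ∈ Icc t0 tf ∧ ν ≤ Ψ v := by
  refine Metric.nhds_basis_closedBall.frequently_iff.2 fun δ hδ => ?_
  obtain ⟨γ, hV, hγ⟩ := exists_validTriple_frequently_pos_of_mem_UDev hU hδ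
  obtain ⟨v, ⟨hγv, hvt⟩, hvI, hcap, hΨv⟩ :=
    ((hγ.filter_mono ae_restrict_le).comp_sub_right Δ |>.and_eventually
      (hV.2.2.2.2.and ((ae_imp_of_ae_restrict hV.2.2.2.1).and
        (ae_imp_of_ae_restrict hΨ)))).exists
  have hvI := hvI hγv.ne'
  refine ⟨v, ?_, hvI, hΨv hvI (by linarith [hcap hvI])⟩
  rw [Real.closedBall_eq_Icc]
  exact ⟨by linarith [hvt.1], by linarith [hvt.2]⟩

end Deviations

theorem stmt9_general {I P : Type*} [Fintype I] [Fintype P] [DecidableEq I]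
    (t0 tf : ℝ)
    (comm : P → I)
    (B : P → ℝ)
    (Q : I → ℝ)
    (Psi : (P → ℝ → ℝ) → P → ℝ → ℝ)
    (hcont : ∀ h ∈ LambdaQ t0 tf comm B Q, ∀ p, ContinuousOn (Psi h p) (Icc t0 tf))
    (hstar : P → ℝ → ℝ) (hmem : hstar ∈ LambdaQ t0 tf comm B Q) :
    IsSCDE t0 tf Psi (LambdaQ t0 tf comm B Q)
        (fun h p => {d | ValidTriple t0 tf comm B h p d.1 d.2.1 d.2.2}) hstar ↔
      IsDEFixedVolume t0 tf comm B Q Psi hstar := by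
  constructor
  · intro hS
    refine ⟨hmem, fun i => ?_⟩
    obtain ⟨M, hM⟩ := exists_forall_abs_le_of_continuousOn isCompact_Icc (hcont hstar hmem)
    obtain ⟨ν, hν⟩ := exists_level_separating (ι := {p // comm p = i})
      (fun p => Psi hstar p) (fun p u => 0 < hstar p u) (fun p v => hstar p v < B p)
      (fun p => (ae_mem_Icc_horizonMeasure t0 tf).mono (hM p))
      fun p q _ hc => hS.ae_le_delay_of_frequently (q.2.trans p.2.symm) (hmem.1 p)
        (hmem.1 q).1.aemeasurable (hmem.2.2 q) (hcont _ hmem p) (hcont _ hmem q) hc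
    exact ⟨ν, fun p hp => hν ⟨p, hp⟩⟩
  · intro hDE
    refine ⟨hmem, fun p t _ q Δ hU => ?_⟩
    obtain ⟨ν, hν⟩ := hDE.2 (comm p)
    have hp := ((hcont _ hmem p).preimage_isClosed_of_isClosed isClosed_Icc
      isClosed_Iic).mem_of_frequently_of_tendsto
      (frequently_le_of_mem_UDev ((hν p rfl).mono fun _ hu => hu.1) hU) tendsto_id
    have hq := ((hcont _ hmem q).preimage_isClosed_of_isClosed isClosed_Icc
      isClosed_Ici).mem_of_frequently_of_tendsto
      (frequently_ge_of_mem_UDev ((hν q (comm_eq_of_mem_UDev hU)).mono fun _ hu => hu.2) hU)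
      tendsto_id
    exact hp.2.trans hq.2

theorem stmt9 {I P : Type*} [Fintype I] [Fintype P] [DecidableEq I]
    (t0 tf : ℝ) (ht0 : 0 ≤ t0) (htf : t0 < tf)
    (comm : P → I) (hcomm : ∀ i, ∃ p, comm p = i)
    (B : P → ℝ) (hB : ∀ p, 0 ≤ B p)
    (Q : I → ℝ) (hQ : ∀ i, 0 ≤ Q i)
    (Psi : (P → ℝ → ℝ) → P → ℝ → ℝ)
    (hcont : ∀ h ∈ LambdaQ t0 tf comm B Q, ∀ p, ContinuousOn (Psi h p) (Icc t0 tf))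
    (hstar : P → ℝ → ℝ) (hmem : hstar ∈ LambdaQ t0 tf comm B Q) :
    IsSCDE t0 tf Psi (LambdaQ t0 tf comm B Q)
        (fun h p => {d | ValidTriple t0 tf comm B h p d.1 d.2.1 d.2.2}) hstar ↔
      IsDEFixedVolume t0 tf comm B Q Psi hstar :=
  stmt9_general t0 tf comm B Q Psi hcont hstar hmem
end
end

section
/- Assume that for every h ∈ Λ(r) and p ∈ 𝒫 the function Ψ_p(h,·) : [t₀,t_f] → ℝ is continuous. Take S := Λ(r), and for each i ∈ I and p ∈ 𝒫_i let A_p(h) := {(q,γ,0) : q ∈ 𝒫_i, γ ∈ L²₊([t₀,t_f]), γ ≤ h_p a.e.}. Then a flow h* ∈ S is a side-constrained dynamic equilibrium w.r.t. S and (A_p) if and only if h* is a dynamic equilibrium with fixed inflow rates. -/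
open MeasureTheory Filter Set

noncomputable section

variable {I P E : Type*}

/-! A dynamic equilibrium is an SCDE: every admissible deviation at `t` is witnessed by small
bumps `γ ≤ h_p` concentrated near `t`, so arbitrarily close to `t` there are times where `h_p`
is positive and hence `Ψ_p ≤ Ψ_q`; continuity of `Ψ` carries the inequality to `t`.
Conversely, at almost every time where `h_p > 0` the set `{h_p > 0}` has positive measure in
every neighbourhood, and truncating `h_p` to such a neighbourhood yields an admissible
deviation to `q` without time shift, so the SCDE condition gives `Ψ_p ≤ Ψ_q` there. -/

instance (t0 tf : ℝ) : IsFiniteMeasure (horizonMeasure t0 tf) :=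
  inferInstanceAs (IsFiniteMeasure (volume.restrict (Icc t0 tf)))

lemma L2nonneg.min_const {t0 tf ε : ℝ} {f : ℝ → ℝ} (hf : L2nonneg t0 tf f) (hε : 0 ≤ ε) :
    L2nonneg t0 tf fun s => min ε (f s) := by
  have hnonneg : 0 ≤ᵐ[horizonMeasure t0 tf] fun s => min ε (f s) :=
    hf.2.mono fun s hs => le_min hε hs
  refine ⟨hf.1.of_le ?_ ?_, hnonneg⟩
  · exact (continuous_const.min continuous_id).comp_aestronglyMeasurable hf.1.1
  · filter_upwards [hf.2, hnonneg] with s hs hmin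
    rw [Real.norm_eq_abs, Real.norm_eq_abs, abs_of_nonneg hs, abs_of_nonneg hmin]
    exact min_le_right ε (f s)

lemma L2nonneg.indicator {t0 tf : ℝ} {f : ℝ → ℝ} (hf : L2nonneg t0 tf f) {J : Set ℝ}
    (hJ : MeasurableSet J) : L2nonneg t0 tf (J.indicator f) :=
  ⟨hf.1.indicator hJ, hf.2.mono fun _ hs => Set.indicator_nonneg (fun _ _ => hs) _⟩

lemma ae_mem_support_restrict {X : Type*} [TopologicalSpace X] [MeasurableSpace X]
    [OpensMeasurableSpace X] [HereditarilyLindelofSpace X] (μ : Measure X) (s : Set X) :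
    ∀ᵐ x ∂μ, x ∈ s → x ∈ (μ.restrict s).support :=
  (ae_restrict_iff Measure.isClosed_support.measurableSet).1 Measure.support_mem_ae

def rerouteDeviations (t0 tf : ℝ) (comm : P → I) :
    (P → ℝ → ℝ) → P → Set (P × (ℝ → ℝ) × ℝ) :=
  fun h p => {d | comm d.1 = comm p ∧ d.2.2 = 0 ∧ L2nonneg t0 tf d.2.1 ∧
    ∀ᵐ t ∂(horizonMeasure t0 tf), d.2.1 t ≤ h p t}

section FixedRates

variable {t0 tf : ℝ} {comm : P → I} {r : I → ℝ → ℝ} {Psi : (P → ℝ → ℝ) → P → ℝ → ℝ}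
  {h : P → ℝ → ℝ}

lemma zero_mem_UDev_rerouteDeviations {p q : P} {t : ℝ}
    (hp : L2nonneg t0 tf (h p)) (hpq : comm q = comm p)
    (ht : t ∈ ((horizonMeasure t0 tf).restrict {s | 0 < h p s}).support) :
    (q, 0) ∈ UDev t0 tf (rerouteDeviations t0 tf comm) h p t := by
  intro δ hδ ε hε
  set J := Icc (t - δ) (t + δ)
  have hγ : L2nonneg t0 tf (J.indicator fun s => min ε (h p s)) :=
    (hp.min_const hε.le).indicator measurableSet_Icc
  have hJpos : 0 < horizonMeasure t0 tf (J ∩ {s | 0 < h p s}) := by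
    rw [← Measure.restrict_apply measurableSet_Icc]
    exact (nhds_basis_Icc_pos t).mem_measureSupport.1 ht δ hδ
  refine ⟨_, hγ, ?_, .of_forall fun s => ?_, .of_forall fun s => Set.mem_of_indicator_ne_zero,
    hpq, rfl, hγ, hp.2.mono fun s hs => ?_⟩
  · rw [integral_pos_iff_support_of_nonneg_ae hγ.2 (hγ.1.integrable one_le_two)]
    refine hJpos.trans_le (measure_mono fun s ⟨hsJ, hs⟩ => ?_)
    rw [Function.mem_support, Set.indicator_of_mem hsJ]
    exact (lt_min hε hs).ne'
  · exact Set.indicator_apply_le' (fun _ => min_le_left _ _) fun _ => hε.le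
  · exact Set.indicator_apply_le' (f := fun s => min ε (h p s)) (fun _ => min_le_right _ _)
      fun _ => hs

lemma IsSCDE.isDEFixedRates [Fintype P] [DecidableEq I]
    (hh : IsSCDE t0 tf Psi (LambdaR t0 tf comm r) (rerouteDeviations t0 tf comm) h) :
    IsDEFixedRates t0 tf comm r Psi h := by
  refine ⟨hh.1, fun p q hpq => ?_⟩
  filter_upwards [ae_restrict_mem measurableSet_Icc,
    ae_mem_support_restrict (horizonMeasure t0 tf) {s | 0 < h p s}] with t ht hsupp hpos
  simpa using hh.2 p t ht q 0 (zero_mem_UDev_rerouteDeviations (hh.1.1 p) hpq.symm (hsupp hpos))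

lemma IsDEFixedRates.isSCDE [Fintype P] [DecidableEq I]
    (hcont : ∀ p, ContinuousOn (Psi h p) (Icc t0 tf))
    (hh : IsDEFixedRates t0 tf comm r Psi h) :
    IsSCDE t0 tf Psi (LambdaR t0 tf comm r) (rerouteDeviations t0 tf comm) h := by
  refine ⟨hh.1, fun p t ht q Δ hU => ?_⟩
  obtain ⟨_, _, _, _, _, hqp, rfl, _⟩ := hU 1 one_pos 1 one_pos
  rw [add_zero]
  refine le_of_tendsto_of_tendsto_of_frequently (hcont p t ht) (hcont q t ht) ?_
  rw [frequently_nhdsWithin_iff, (nhds_basis_Icc_pos t).frequently_iff]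
  intro δ hδ
  obtain ⟨γ, ⟨-, hγ0⟩, hγint, -, hγsupp, -, -, -, hγle⟩ := hU δ hδ 1 one_pos
  have hγne : ∃ᵐ s ∂(horizonMeasure t0 tf), γ s ≠ 0 := fun hγ =>
    hγint.ne' (integral_eq_zero_of_ae (hγ.mono fun _ => not_not.1))
  obtain ⟨s, hs, hγs0, hγsle, hsJ, hde, hsI⟩ := (hγne.and_eventually (hγ0.and (hγle.and
    (hγsupp.and ((hh.2 p q hqp.symm).and (ae_restrict_mem measurableSet_Icc)))))).exists
  exact ⟨s, hsJ hs, hde ((lt_of_le_of_ne hγs0 (Ne.symm hs)).trans_le hγsle), hsI⟩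

end FixedRates

theorem stmt10_general {I P : Type*} [Fintype I] [Fintype P] [DecidableEq I]
    (t0 tf : ℝ)
    (comm : P → I)
    (r : I → ℝ → ℝ)
    (Psi : (P → ℝ → ℝ) → P → ℝ → ℝ)
    (hcont : ∀ h ∈ LambdaR t0 tf comm r, ∀ p, ContinuousOn (Psi h p) (Icc t0 tf))
    (hstar : P → ℝ → ℝ) :
    IsSCDE t0 tf Psi (LambdaR t0 tf comm r)
        (fun h p => {d | comm d.1 = comm p ∧ d.2.2 = 0 ∧ L2nonneg t0 tf d.2.1 ∧
          ∀ᵐ t ∂(horizonMeasure t0 tf), d.2.1 t ≤ h p t}) hstar ↔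
      IsDEFixedRates t0 tf comm r Psi hstar :=
  ⟨IsSCDE.isDEFixedRates, fun hh => hh.isSCDE (hcont hstar hh.1)⟩

theorem stmt10 {I P : Type*} [Fintype I] [Fintype P] [DecidableEq I]
    (t0 tf : ℝ) (ht0 : 0 ≤ t0) (htf : t0 < tf)
    (comm : P → I) (hcomm : ∀ i, ∃ p, comm p = i)
    (r : I → ℝ → ℝ) (hr : ∀ i, L2nonneg t0 tf (r i))
    (Psi : (P → ℝ → ℝ) → P → ℝ → ℝ)
    (hcont : ∀ h ∈ LambdaR t0 tf comm r, ∀ p, ContinuousOn (Psi h p) (Icc t0 tf))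
    (hstar : P → ℝ → ℝ) (hmem : hstar ∈ LambdaR t0 tf comm r) :
    IsSCDE t0 tf Psi (LambdaR t0 tf comm r)
        (fun h p => {d | comm d.1 = comm p ∧ d.2.2 = 0 ∧ L2nonneg t0 tf d.2.1 ∧
          ∀ᵐ t ∂(horizonMeasure t0 tf), d.2.1 t ≤ h p t}) hstar ↔
      IsDEFixedRates t0 tf comm r Psi hstar :=
  stmt10_general t0 tf comm r Psi hcont hstar

end
end

section
/- Let S ⊆ Λ(r) be a constraint set with fixed inflow rates and (A_p) admissible γ-deviations such that S is closed with respect to elementary directions, and assume Ψ_p(h,·) ∈ L²([t₀,t_f]) for every h ∈ S and p ∈ 𝒫. Then every side-constrained dynamic equilibrium h* ∈ S w.r.t. S and (A_p) is a solution of the variational inequality VI(Ψ,S), i.e. ⟨Ψ(h*), h − h*⟩ ≥ 0 for all h ∈ S. -/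
open MeasureTheory Filter Set

noncomputable section

variable {I P E : Type*}

/-!
Fix `h ∈ S`. At almost every time both `h` and the equilibrium `h*` route the same inflow
`r_i(t)` through the walks of each commodity `i`, so `h(t) - h*(t)` sums to zero over every
commodity. If the pointwise product `Σ_p Ψ_p(h*,t) (h_p(t) - h*_p(t))` were negative, there
would be walks `p, q` of one commodity with `h_p(t) < h*_p(t)`, `h*_q(t) < h_q(t)` and
`Ψ_q(h*,t) < Ψ_p(h*,t)`. If this happened on a set of positive measure, closedness under
elementary directions would make `(q,0)` an admissible deviation from `p` at one of these times,
against the equilibrium condition. Hence the integrand is a.e. nonnegative.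
-/

lemma exists_pair_of_sum_eq_zero_of_weighted_sum_neg {ι : Type*} (F : Finset ι) (a c : ι → ℝ)
    (hsum : ∑ i ∈ F, a i = 0) (hneg : ∑ i ∈ F, c i * a i < 0) :
    ∃ i ∈ F, ∃ j ∈ F, a i < 0 ∧ 0 < a j ∧ c j < c i := by
  classical
  by_contra! hcon
  obtain ⟨i₀, hi₀, hmax⟩ : ∃ i₀ ∈ F.filter (a · < 0), ∀ i ∈ F.filter (a · < 0), c i ≤ c i₀ := by
    refine Finset.exists_max_image _ c ?_
    by_contra hempty
    rw [Finset.not_nonempty_iff_eq_empty, Finset.filter_eq_empty_iff] at hempty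
    have hzero : ∀ i ∈ F, a i = 0 :=
      (Finset.sum_eq_zero_iff_of_nonneg fun i hi => not_lt.mp (hempty hi)).1 hsum
    rw [Finset.sum_eq_zero fun i hi => by rw [hzero i hi, mul_zero]] at hneg
    exact hneg.false
  rw [Finset.mem_filter] at hi₀
  -- `c i₀` separates the costs of the walks losing flow from those gaining flow
  have hterm : ∀ i ∈ F, 0 ≤ (c i - c i₀) * a i := by
    intro i hi
    rcases lt_trichotomy (a i) 0 with hlt | heq | hgt
    · exact mul_nonneg_of_nonpos_of_nonpos
        (sub_nonpos.mpr (hmax i (Finset.mem_filter.mpr ⟨hi, hlt⟩))) hlt.le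
    · simp [heq]
    · exact mul_nonneg (sub_nonneg.mpr (hcon i₀ hi₀.1 i hi hi₀.2 hgt)) hgt.le
  have : ∑ i ∈ F, c i * a i = ∑ i ∈ F, (c i - c i₀) * a i := by
    simp only [sub_mul, Finset.sum_sub_distrib, ← Finset.mul_sum, hsum, mul_zero, sub_zero]
  exact (Finset.sum_nonneg hterm).not_gt (this ▸ hneg)

lemma exists_pair_of_commWalks_sum_eq_zero_of_weighted_sum_neg [Fintype P] [DecidableEq I]
    (comm : P → I) (a c : P → ℝ)
    (hsum : ∀ p, ∑ q ∈ commWalks comm (comm p), a q = 0) (hneg : ∑ p, c p * a p < 0) :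
    ∃ p q, comm p = comm q ∧ a p < 0 ∧ 0 < a q ∧ c q < c p := by
  rw [← Finset.sum_fiberwise_of_maps_to (t := Finset.univ.image comm)
    (fun p _ => Finset.mem_image_of_mem comm (Finset.mem_univ p))] at hneg
  obtain ⟨_, hi, hi_neg⟩ : ∃ i ∈ Finset.univ.image comm,
      ∑ p ∈ commWalks comm i, c p * a p < 0 := by
    by_contra! hnonneg
    exact hneg.not_ge (Finset.sum_nonneg hnonneg)
  obtain ⟨p₀, -, rfl⟩ := Finset.mem_image.mp hi
  obtain ⟨p, hp, q, hq, hap, haq, hc⟩ :=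
    exists_pair_of_sum_eq_zero_of_weighted_sum_neg _ a c (hsum p₀) hi_neg
  rw [commWalks, Finset.mem_filter] at hp hq
  exact ⟨p, q, hp.2.trans hq.2.symm, hap, haq, hc⟩

lemma MeasureTheory.NullMeasurableSet.exists_measurableSet_subset_inter_pos {α : Type*}
    [MeasurableSpace α] {μ : Measure α} {s K : Set α} (hK : MeasurableSet K)
    (hs : NullMeasurableSet s (μ.restrict K)) (hpos : μ.restrict K s ≠ 0) :
    ∃ J ⊆ s ∩ K, MeasurableSet J ∧ 0 < μ J := by
  obtain ⟨t, hts, ht, hae⟩ := hs.exists_measurable_subset_ae_eq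
  refine ⟨t ∩ K, inter_subset_inter_left K hts, ht.inter hK, pos_iff_ne_zero.mpr ?_⟩
  rwa [← Measure.restrict_apply ht, measure_congr hae]

/-- The times at which `h' - h` is an elementary direction from `p` to `q` and `q` is cheaper
than `p` under the costs `Ψ`. -/
def profitableSwapSet (Ψ h h' : P → ℝ → ℝ) (p q : P) : Set ℝ :=
  {t | h' p t < h p t ∧ h q t < h' q t ∧ Ψ q t < Ψ p t}

lemma nullMeasurableSet_profitableSwapSet {μ : Measure ℝ} {Ψ h h' : P → ℝ → ℝ}
    (hΨ : ∀ p, AEStronglyMeasurable (Ψ p) μ) (hh : ∀ p, AEStronglyMeasurable (h p) μ)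
    (hh' : ∀ p, AEStronglyMeasurable (h' p) μ) (p q : P) :
    NullMeasurableSet (profitableSwapSet Ψ h h' p q) μ :=
  (AEStronglyMeasurable.nullMeasurableSet_lt (hh' p) (hh p)).inter
    ((AEStronglyMeasurable.nullMeasurableSet_lt (hh q) (hh' q)).inter
      (AEStronglyMeasurable.nullMeasurableSet_lt (hΨ q) (hΨ p)))

lemma IsSCDE.horizonMeasure_profitableSwapSet_eq_zero {t0 tf : ℝ} {comm : P → I}
    {Psi : (P → ℝ → ℝ) → P → ℝ → ℝ} {S : Set (P → ℝ → ℝ)}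
    {A : (P → ℝ → ℝ) → P → Set (P × (ℝ → ℝ) × ℝ)} {hstar h : P → ℝ → ℝ}
    (hscde : IsSCDE t0 tf Psi S A hstar) (helem : ClosedElemDir t0 tf comm S A) (hh : h ∈ S)
    {p q : P} (hpq : comm p = comm q)
    (hmeas : NullMeasurableSet (profitableSwapSet (Psi hstar) hstar h p q)
      (horizonMeasure t0 tf)) :
    horizonMeasure t0 tf (profitableSwapSet (Psi hstar) hstar h p q) = 0 := by
  by_contra hpos
  obtain ⟨J, hJ, hJm, hJpos⟩ :=
    hmeas.exists_measurableSet_subset_inter_pos measurableSet_Icc hpos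
  obtain ⟨t, htJ, hU⟩ := helem hstar hscde.1 h hh p q hpq J (fun t ht => (hJ ht).2) hJm hJpos
    fun t ht => ⟨(hJ ht).1.1, (hJ ht).1.2.1⟩
  have hle := hscde.2 p t (hJ htJ).2 q 0 hU
  rw [add_zero] at hle
  exact (hJ htJ).1.2.2.not_ge hle

section Inner

variable [Fintype P] [DecidableEq I]

lemma inner2_eq_integral_sum {t0 tf : ℝ} {f g : P → ℝ → ℝ}
    (hint : ∀ p, Integrable (fun t => f p t * g p t) (horizonMeasure t0 tf)) :
    inner2 t0 tf f g = ∫ t, ∑ p, f p t * g p t ∂(horizonMeasure t0 tf) :=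
  (integral_finsetSum _ fun p _ => hint p).symm

lemma ae_sum_commWalks_sub_eq_zero_of_mem_LambdaR {t0 tf : ℝ} {comm : P → I} {r : I → ℝ → ℝ}
    {h h' : P → ℝ → ℝ} (hh : h ∈ LambdaR t0 tf comm r) (hh' : h' ∈ LambdaR t0 tf comm r) :
    ∀ᵐ t ∂(horizonMeasure t0 tf), ∀ p,
      ∑ q ∈ commWalks comm (comm p), (h' q t - h q t) = 0 := by
  rw [ae_all_iff]
  intro p
  filter_upwards [hh.2 (comm p), hh'.2 (comm p)] with t ht ht'
  rw [Finset.sum_sub_distrib, ht, ht', sub_self]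

lemma inner2_sub_nonneg_of_profitableSwapSet_null {t0 tf : ℝ} {comm : P → I}
    {r : I → ℝ → ℝ} {Ψ h h' : P → ℝ → ℝ} (hh : h ∈ LambdaR t0 tf comm r)
    (hh' : h' ∈ LambdaR t0 tf comm r) (hΨ : ∀ p, MemLp (Ψ p) 2 (horizonMeasure t0 tf))
    (hnull : ∀ p q, comm p = comm q →
      horizonMeasure t0 tf (profitableSwapSet Ψ h h' p q) = 0) :
    0 ≤ inner2 t0 tf Ψ (fun p t => h' p t - h p t) := by
  rw [inner2_eq_integral_sum (g := fun p t => h' p t - h p t)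
    fun p => (hΨ p).integrable_mul ((hh'.1 p).1.sub (hh.1 p).1)]
  refine integral_nonneg_of_ae ?_
  have hout : ∀ᵐ t ∂(horizonMeasure t0 tf), ∀ p q, comm p = comm q →
      t ∉ profitableSwapSet Ψ h h' p q := by
    simp only [ae_all_iff, ← measure_eq_zero_iff_ae_notMem, eventually_imp_distrib_left]
    exact hnull
  filter_upwards [ae_sum_commWalks_sub_eq_zero_of_mem_LambdaR hh hh', hout] with t hsum hout
  by_contra! hneg
  obtain ⟨p, q, hpq, hp, hq, hc⟩ :=
    exists_pair_of_commWalks_sum_eq_zero_of_weighted_sum_neg comm _ _ hsum hneg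
  exact hout p q hpq ⟨sub_neg.mp hp, sub_pos.mp hq, hc⟩

end Inner

theorem stmt15_general {I P : Type*} [Fintype P] [DecidableEq I]
    (t0 tf : ℝ)
    (comm : P → I)
    (r : I → ℝ → ℝ)
    (Psi : (P → ℝ → ℝ) → P → ℝ → ℝ)
    (S : Set (P → ℝ → ℝ)) (hS : S ⊆ LambdaR t0 tf comm r)
    (A : (P → ℝ → ℝ) → P → Set (P × (ℝ → ℝ) × ℝ))
    (helem : ClosedElemDir t0 tf comm S A)
    (hL2 : ∀ h ∈ S, ∀ p, MemLp (Psi h p) 2 (horizonMeasure t0 tf))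
    (hstar : P → ℝ → ℝ) (hscde : IsSCDE t0 tf Psi S A hstar) :
    ∀ h ∈ S, 0 ≤ inner2 t0 tf (Psi hstar) (fun p t => h p t - hstar p t) := by
  intro h hh
  have hΨ := hL2 hstar hscde.1
  have hstarΛ := hS hscde.1
  have hhΛ := hS hh
  refine inner2_sub_nonneg_of_profitableSwapSet_null hstarΛ hhΛ hΨ fun p q hpq => ?_
  exact hscde.horizonMeasure_profitableSwapSet_eq_zero helem hh hpq
    (nullMeasurableSet_profitableSwapSet (fun p => (hΨ p).1) (fun p => (hstarΛ.1 p).1.1)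
      (fun p => (hhΛ.1 p).1.1) p q)

theorem stmt15 {I P : Type*} [Fintype I] [Fintype P] [DecidableEq I]
    (t0 tf : ℝ) (ht0 : 0 ≤ t0) (htf : t0 < tf)
    (comm : P → I) (hcomm : ∀ i, ∃ p, comm p = i)
    (r : I → ℝ → ℝ) (hr : ∀ i, L2nonneg t0 tf (r i))
    (Psi : (P → ℝ → ℝ) → P → ℝ → ℝ)
    (S : Set (P → ℝ → ℝ)) (hS : S ⊆ LambdaR t0 tf comm r)
    (A : (P → ℝ → ℝ) → P → Set (P × (ℝ → ℝ) × ℝ))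
    (hA : ∀ h ∈ S, ∀ p, ∀ d ∈ A h p, comm d.1 = comm p ∧ L2nonneg t0 tf d.2.1 ∧
      ∀ᵐ t ∂(horizonMeasure t0 tf), d.2.1 t ≤ h p t)
    (helem : ClosedElemDir t0 tf comm S A)
    (hL2 : ∀ h ∈ S, ∀ p, MemLp (Psi h p) 2 (horizonMeasure t0 tf))
    (hstar : P → ℝ → ℝ) (hscde : IsSCDE t0 tf Psi S A hstar) :
    ∀ h ∈ S, 0 ≤ inner2 t0 tf (Psi hstar) (fun p t => h p t - hstar p t) :=
  stmt15_general t0 tf comm r Psi S hS A helem hL2 hstar hscde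
end
end

section
/- Let z_p : ℝ≥0 → ℝ≥0 be continuous and nondecreasing and v_p : [t₀,t_f] → ℝ≥0 be continuous, for every p ∈ 𝒫, and define S := {h ∈ Λ(r) : z_p(h_p(t)) ≤ v_p(t) for every p ∈ 𝒫 and almost all t ∈ [t₀,t_f]}, with admissible γ-deviations A_p(h) := {(q,γ,Δ) : q ∈ 𝒫_i, γ ∈ L²₊([t₀,t_f]), γ ≤ h_p a.e., H_{p→q}(h,γ,Δ) ∈ S}. Then S is closed with respect to elementary directions. -/
open MeasureTheory Filter Set

noncomputable section

variable {I P E : Type*}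

/-! Pick `t ∈ J` every neighbourhood of which meets `J` in positive measure. Given `δ` and `ε`,
on `K = J ∩ [t - δ, t + δ]` move `γ = min(ε, h_p - h'_p, h'_q - h_q)` from `p` to `q` without
time shift. Commodity sums do not change, and every component of the new inflow lies a.e.
between `0` and `max(h_w, h'_w)`; as `z_w` is monotone and both `h` and `h'` satisfy the side
constraints, so does the new inflow. -/

instance inst_s16 (t0 tf : ℝ) : IsFiniteMeasure (horizonMeasure t0 tf) := by
  unfold horizonMeasure; infer_instance

def constrainedLambdaR [Fintype P] [DecidableEq I] (t0 tf : ℝ) (comm : P → I)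
    (r : I → ℝ → ℝ) (z v : P → ℝ → ℝ) : Set (P → ℝ → ℝ) :=
  {h | h ∈ LambdaR t0 tf comm r ∧ ∀ p, ∀ᵐ t ∂(horizonMeasure t0 tf), z p (h p t) ≤ v p t}

lemma MonotoneOn.le_of_le_max {z : ℝ → ℝ} (hz : MonotoneOn z (Ici 0)) {x y y' c : ℝ}
    (hx : 0 ≤ x) (hxy : x ≤ max y y') (hy : z y ≤ c) (hy' : z y' ≤ c) : z x ≤ c :=
  (hz hx (hx.trans hxy) hxy).trans <| by
    rcases max_choice y y' with h | h <;> rw [h] <;> assumption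

section Hshift

variable [DecidableEq P] {h h' : P → ℝ → ℝ} {p q : P} {γ : ℝ → ℝ}

lemma Hshift_zero_eq (w : P) :
    Hshift h p q γ 0 w = h w + (if w = q then γ else 0) - (if w = p then γ else 0) := by
  ext s
  simp only [Hshift, sub_zero]
  split_ifs <;> rfl

lemma Hshift_zero_apply_mem_Icc {s : ℝ} (hh : ∀ w, 0 ≤ h w s) (hγ : 0 ≤ γ s)
    (hγp : γ s ≤ h p s) (hγq : h q s + γ s ≤ max (h q s) (h' q s)) (w : P) :
    Hshift h p q γ 0 w s ∈ Icc 0 (max (h w s) (h' w s)) := by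
  simp only [Hshift, sub_zero]
  split_ifs <;> subst_vars <;> constructor <;> linarith [hh w, le_max_left (h w s) (h' w s)]

lemma sum_commWalks_Hshift_zero [Fintype P] [DecidableEq I] {comm : P → I}
    (hpq : comm p = comm q) (i : I) (s : ℝ) :
    ∑ w ∈ commWalks comm i, Hshift h p q γ 0 w s = ∑ w ∈ commWalks comm i, h w s := by
  have hmem : p ∈ commWalks comm i ↔ q ∈ commWalks comm i := by simp [commWalks, hpq]
  simp only [Hshift, sub_zero, Finset.sum_sub_distrib, Finset.sum_add_distrib,
    Finset.sum_ite_eq', hmem]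
  split_ifs <;> ring

lemma Hshift_zero_mem_constrainedLambdaR [Fintype P] [DecidableEq I] {t0 tf : ℝ}
    {comm : P → I} {r : I → ℝ → ℝ} {z v : P → ℝ → ℝ} (hz : ∀ p, MonotoneOn (z p) (Ici 0))
    (hS : h ∈ constrainedLambdaR t0 tf comm r z v)
    (hS' : h' ∈ constrainedLambdaR t0 tf comm r z v) (hpq : comm p = comm q)
    (hγ : L2nonneg t0 tf γ) (hγp : ∀ᵐ s ∂horizonMeasure t0 tf, γ s ≤ h p s)
    (hγq : ∀ᵐ s ∂horizonMeasure t0 tf, h q s + γ s ≤ max (h q s) (h' q s)) :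
    Hshift h p q γ 0 ∈ constrainedLambdaR t0 tf comm r z v := by
  obtain ⟨⟨hL2, hsum⟩, hzv⟩ := hS
  have hbounds : ∀ᵐ s ∂horizonMeasure t0 tf,
      ∀ w, Hshift h p q γ 0 w s ∈ Icc 0 (max (h w s) (h' w s)) := by
    filter_upwards [ae_all_iff.2 fun w => (hL2 w).2, hγ.2, hγp, hγq] with s hs hγs hγps hγqs
    exact Hshift_zero_apply_mem_Icc hs hγs hγps hγqs
  have hmemLp (w : P) : MemLp (Hshift h p q γ 0 w) 2 (horizonMeasure t0 tf) := by
    rw [Hshift_zero_eq]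
    refine ((hL2 w).1.add ?_).sub ?_ <;> split_ifs <;> first | exact hγ.1 | exact MemLp.zero
  refine ⟨⟨fun w => ⟨hmemLp w, ?_⟩, fun i => ?_⟩, fun w => ?_⟩
  · filter_upwards [hbounds] with s hs using (hs w).1
  · filter_upwards [hsum i] with s hs
    rw [sum_commWalks_Hshift_zero hpq, hs]
  · filter_upwards [hbounds, hzv w, hS'.2 w] with s hs hzs hzs'
    exact (hz w).le_of_le_max (hs w).1 (hs w).2 hzs hzs'

end Hshift

section Truncation

variable {t0 tf ε : ℝ} {K : Set ℝ} {f : ℝ → ℝ}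

lemma indicator_min_nonneg (hε : 0 ≤ ε) (hfK : ∀ s ∈ K, 0 ≤ f s) (s : ℝ) :
    0 ≤ K.indicator (fun s => min ε (f s)) s :=
  indicator_nonneg (fun s hs => le_min hε (hfK s hs)) s

lemma indicator_min_le (hε : 0 ≤ ε) (s : ℝ) : K.indicator (fun s => min ε (f s)) s ≤ ε :=
  indicator_apply_le' (fun _ => min_le_left _ _) (fun _ => hε)

lemma indicator_min_le_of_le {s a : ℝ} (hfa : s ∈ K → f s ≤ a) (ha : 0 ≤ a) :
    K.indicator (fun s => min ε (f s)) s ≤ a :=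
  indicator_apply_le' (fun hs => (min_le_right _ _).trans (hfa hs)) (fun _ => ha)

lemma add_indicator_min_le_max {s b b' : ℝ} (hf : s ∈ K → b + f s ≤ b') :
    b + K.indicator (fun s => min ε (f s)) s ≤ max b b' := by
  by_cases hs : s ∈ K
  · rw [indicator_of_mem hs]
    exact le_max_of_le_right ((add_le_add_right (min_le_right _ _) b).trans (hf hs))
  · rw [indicator_of_notMem hs, add_zero]
    exact le_max_left _ _

lemma L2nonneg_indicator_min (hK : MeasurableSet K) (hf : AEMeasurable f (horizonMeasure t0 tf))
    (hε : 0 ≤ ε) (hfK : ∀ s ∈ K, 0 ≤ f s) :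
    L2nonneg t0 tf (K.indicator fun s => min ε (f s)) := by
  refine ⟨MemLp.of_bound ((aemeasurable_const.min hf).indicator hK).aestronglyMeasurable ε
    (Eventually.of_forall fun s => ?_), Eventually.of_forall (indicator_min_nonneg hε hfK)⟩
  rw [Real.norm_of_nonneg (indicator_min_nonneg hε hfK s)]
  exact indicator_min_le hε s

lemma integral_indicator_min_pos (hK : MeasurableSet K) (hKsub : K ⊆ Icc t0 tf)
    (hKpos : 0 < volume K) (hf : AEMeasurable f (horizonMeasure t0 tf)) (hε : 0 < ε)
    (hfK : ∀ s ∈ K, 0 < f s) :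
    0 < ∫ s, K.indicator (fun s => min ε (f s)) s ∂horizonMeasure t0 tf := by
  have hL2 := L2nonneg_indicator_min hK hf hε.le fun s hs => (hfK s hs).le
  rw [integral_pos_iff_support_of_nonneg_ae hL2.2 (hL2.1.integrable one_le_two)]
  have hsupp : K ⊆ Function.support (K.indicator fun s => min ε (f s)) := fun s hs => by
    rw [Function.mem_support, indicator_of_mem hs]
    exact (lt_min hε (hfK s hs)).ne'
  refine hKpos.trans_le ((measure_mono hsupp).trans_eq' ?_)
  rw [horizonMeasure, Measure.restrict_apply hK, inter_eq_self_of_subset_left hKsub]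

end Truncation

theorem stmt16_general {I P : Type*} [Fintype P] [DecidableEq I] [DecidableEq P]
    (t0 tf : ℝ)
    (comm : P → I)
    (r : I → ℝ → ℝ)
    (z : P → ℝ → ℝ)
    (hzm : ∀ p, MonotoneOn (z p) (Ici 0))
    (v : P → ℝ → ℝ) :
    ClosedElemDir t0 tf comm
      {h | h ∈ LambdaR t0 tf comm r ∧
        ∀ p, ∀ᵐ t ∂(horizonMeasure t0 tf), z p (h p t) ≤ v p t}
      (fun h p => {d | comm d.1 = comm p ∧ L2nonneg t0 tf d.2.1 ∧
        (∀ᵐ t ∂(horizonMeasure t0 tf), d.2.1 t ≤ h p t) ∧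
        Hshift h p d.1 d.2.1 d.2.2 ∈
          {h' | h' ∈ LambdaR t0 tf comm r ∧
            ∀ p', ∀ᵐ t ∂(horizonMeasure t0 tf), z p' (h' p' t) ≤ v p' t}}) := by
  intro h hS h' hS' p q hpq J hJsub hJmeas hJpos hJ
  obtain ⟨t, htJ, ht⟩ := exists_mem_forall_mem_nhdsWithin_pos_measure hJpos.ne'
  refine ⟨t, htJ, fun δ hδ ε hε => ?_⟩
  set K := J ∩ Icc (t - δ) (t + δ)
  have hK : MeasurableSet K := hJmeas.inter measurableSet_Icc
  have hKpos : 0 < volume K :=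
    ht K (inter_mem_nhdsWithin J (Icc_mem_nhds (by linarith) (by linarith)))
  set f := fun s => min (h p s - h' p s) (h' q s - h q s)
  have hfK (s : ℝ) (hs : s ∈ K) : 0 < f s :=
    lt_min (sub_pos.2 (hJ s hs.1).1) (sub_pos.2 (hJ s hs.1).2)
  have hf : AEMeasurable f (horizonMeasure t0 tf) := by
    have hm (g : P → ℝ → ℝ) (hg : g ∈ LambdaR t0 tf comm r) (w : P) :=
      (hg.1 w).1.aestronglyMeasurable.aemeasurable
    exact ((hm h hS.1 p).sub (hm h' hS'.1 p)).min ((hm h' hS'.1 q).sub (hm h hS.1 q))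
  set γ := K.indicator fun s => min ε (f s)
  have hγ := L2nonneg_indicator_min hK hf hε.le fun s hs => (hfK s hs).le
  have hγp : ∀ᵐ s ∂horizonMeasure t0 tf, γ s ≤ h p s := by
    filter_upwards [(hS.1.1 p).2, (hS'.1.1 p).2] with s (hs : 0 ≤ h p s) (hs' : 0 ≤ h' p s)
    exact indicator_min_le_of_le (fun _ => (min_le_left _ _).trans (sub_le_self _ hs')) hs
  have hγq (s : ℝ) : h q s + γ s ≤ max (h q s) (h' q s) :=
    add_indicator_min_le_max fun _ => add_le_of_le_sub_left (min_le_right _ _)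
  exact ⟨γ, hγ, integral_indicator_min_pos hK (fun s hs => hJsub hs.1) hKpos hf hε hfK,
    Eventually.of_forall (indicator_min_le hε.le),
    Eventually.of_forall fun s hs => (mem_of_indicator_ne_zero hs).2, hpq.symm, hγ, hγp,
    Hshift_zero_mem_constrainedLambdaR hzm hS hS' hpq hγ hγp (Eventually.of_forall hγq)⟩

theorem stmt16 {I P : Type*} [Fintype I] [Fintype P] [DecidableEq I] [DecidableEq P]
    (t0 tf : ℝ) (ht0 : 0 ≤ t0) (htf : t0 < tf)
    (comm : P → I) (hcomm : ∀ i, ∃ p, comm p = i)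
    (r : I → ℝ → ℝ) (hr : ∀ i, L2nonneg t0 tf (r i))
    (z : P → ℝ → ℝ)
    (hzc : ∀ p, ContinuousOn (z p) (Ici 0))
    (hzm : ∀ p, MonotoneOn (z p) (Ici 0))
    (hznn : ∀ p, ∀ x ∈ Ici (0:ℝ), 0 ≤ z p x)
    (v : P → ℝ → ℝ)
    (hvc : ∀ p, ContinuousOn (v p) (Icc t0 tf))
    (hvnn : ∀ p, ∀ t ∈ Icc t0 tf, 0 ≤ v p t) :
    ClosedElemDir t0 tf comm
      {h | h ∈ LambdaR t0 tf comm r ∧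
        ∀ p, ∀ᵐ t ∂(horizonMeasure t0 tf), z p (h p t) ≤ v p t}
      (fun h p => {d | comm d.1 = comm p ∧ L2nonneg t0 tf d.2.1 ∧
        (∀ᵐ t ∂(horizonMeasure t0 tf), d.2.1 t ≤ h p t) ∧
        Hshift h p d.1 d.2.1 d.2.2 ∈
          {h' | h' ∈ LambdaR t0 tf comm r ∧
            ∀ p', ∀ᵐ t ∂(horizonMeasure t0 tf), z p' (h' p' t) ≤ v p' t}}) :=
  stmt16_general t0 tf comm r z hzm v

end
end
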